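/- With t(λ) = h(λ)² - 2h'(λ) + 2(2X⁻(λ) + ξλ)X⁺(λ), one has [t(λ), h(μ)] = 8(X⁻(μ)X⁺(λ) - X⁻(λ)X⁺(μ))/(λ-μ) - 4ξ(1 + μh(λ))X⁺(μ). -/

import Mathlib

noncomputable section

/-- The current `h(λ) = Σ_a (h_a/(λ-z_a) + ξ z_a X⁺_a)`. -/
def hCur {A : Type*} [Ring A] [Algebra ℂ A] {N : ℕ} (z : Fin N → ℂ) (ξ : ℂ)
    (H Xp : Fin N → A) (l : ℂ) : A :=
  ∑ a, ((l - z a)⁻¹ • H a + (ξ * z a) • Xp a)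

/-- The current `X⁻(λ) = Σ_a (X⁻_a/(λ-z_a) - (ξ/2)λ h_a)`. -/
def XmCur {A : Type*} [Ring A] [Algebra ℂ A] {N : ℕ} (z : Fin N → ℂ) (ξ : ℂ)
    (H Xm : Fin N → A) (l : ℂ) : A :=
  ∑ a, ((l - z a)⁻¹ • Xm a - (ξ / 2 * l) • H a)

/-- The current `X⁺(λ) = Σ_a X⁺_a/(λ-z_a)`. -/
def XpCur {A : Type*} [Ring A] [Algebra ℂ A] {N : ℕ} (z : Fin N → ℂ)
    (Xp : Fin N → A) (l : ℂ) : A :=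
  ∑ a, (l - z a)⁻¹ • Xp a

/-- The λ-derivative `h'(λ) = -Σ_a h_a/(λ-z_a)²` of the current `h(λ)`. -/
def hdCur {A : Type*} [Ring A] [Algebra ℂ A] {N : ℕ} (z : Fin N → ℂ)
    (H : Fin N → A) (l : ℂ) : A :=
  ∑ a, (-((l - z a) ^ 2)⁻¹) • H a

/-- The generating function `t(λ) = h(λ)² - 2h'(λ) + 2(2X⁻(λ) + ξλ)X⁺(λ)`. -/
def tCur {A : Type*} [Ring A] [Algebra ℂ A] {N : ℕ} (z : Fin N → ℂ) (ξ : ℂ)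
    (H Xp Xm : Fin N → A) (l : ℂ) : A :=
  hCur z ξ H Xp l * hCur z ξ H Xp l - (2 : ℂ) • hdCur z H l +
    ((2 : ℂ) • ((2 : ℂ) • XmCur z ξ H Xm l + (ξ * l) • (1 : A))) * XpCur z Xp l

/-- The sl₂ relations at every site, and commutativity of generators at distinct sites. -/
def GaudinSites {A : Type*} [Ring A] [Algebra ℂ A] {N : ℕ}
    (H Xp Xm : Fin N → A) : Prop :=
  (∀ a, H a * Xp a - Xp a * H a = (2 : ℂ) • Xp a) ∧
  (∀ a, Xp a * Xm a - Xm a * Xp a = H a) ∧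
  (∀ a, H a * Xm a - Xm a * H a = (-2 : ℂ) • Xm a) ∧
  (∀ a b, a ≠ b → ∀ x ∈ ({H a, Xp a, Xm a} : Set A), ∀ y ∈ ({H b, Xp b, Xm b} : Set A),
    Commute x y)

set_option linter.unusedSectionVars false
set_option linter.unnecessarySeqFocus false

namespace GaudinAux

variable {A : Type*} [Ring A] [Algebra ℂ A]

def br (x y : A) : A := x * y - y * x

lemma br_add_left (x y w : A) : br (x + y) w = br x w + br y w := by
  simp only [br, add_mul, mul_add]; abel
lemma br_add_right (x y w : A) : br x (y + w) = br x y + br x w := by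
  simp only [br, add_mul, mul_add]; abel
lemma br_sub_left (x y w : A) : br (x - y) w = br x w - br y w := by
  simp only [br, sub_mul, mul_sub]; abel
lemma br_sub_right (x y w : A) : br x (y - w) = br x y - br x w := by
  simp only [br, sub_mul, mul_sub]; abel
lemma br_smul_left (c : ℂ) (x w : A) : br (c • x) w = c • br x w := by
  simp only [br, smul_mul_assoc, mul_smul_comm, smul_sub]
lemma br_smul_right (c : ℂ) (x w : A) : br x (c • w) = c • br x w := by
  simp only [br, smul_mul_assoc, mul_smul_comm, smul_sub]
lemma br_skew (x y : A) : br x y = - br y x := by simp [br]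
lemma br_mul_left (x y w : A) : br (x * y) w = x * br y w + br x w * y := by
  simp only [br, mul_sub, sub_mul, mul_assoc]; abel
lemma br_one_left (y : A) : br (1 : A) y = 0 := by simp [br]
lemma br_neg_left (x w : A) : br (-x) w = - br x w := by
  simp only [br, neg_mul, mul_neg]; abel
lemma br_neg_right (x w : A) : br x (-w) = - br x w := by
  simp only [br, neg_mul, mul_neg]; abel
lemma br_sum_left {N : ℕ} (f : Fin N → A) (y : A) :
    br (∑ a, f a) y = ∑ a, br (f a) y := by
  simp only [br, Finset.sum_mul, Finset.mul_sum, Finset.sum_sub_distrib]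
lemma br_sum_right {N : ℕ} (x : A) (g : Fin N → A) :
    br x (∑ a, g a) = ∑ a, br x (g a) := by
  simp only [br, Finset.sum_mul, Finset.mul_sum, Finset.sum_sub_distrib]
lemma br_sum_sum {N : ℕ} (f g : Fin N → A) :
    br (∑ a, f a) (∑ b, g b) = ∑ a, ∑ b, br (f a) (g b) := by
  rw [br_sum_left]; exact Finset.sum_congr rfl fun a _ => br_sum_right _ _

section Sites
variable {N : ℕ} {H Xp Xm : Fin N → A} (hG : GaudinSites H Xp Xm)
include hG

lemma cross {a b : Fin N} (hab : a ≠ b) {x y : A}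
    (hx : x ∈ ({H a, Xp a, Xm a} : Set A)) (hy : y ∈ ({H b, Xp b, Xm b} : Set A)) :
    br x y = 0 :=
  sub_eq_zero_of_eq (hG.2.2.2 a b hab x hx y hy)

lemma brHH (a b : Fin N) : br (H a) (H b) = 0 := by
  rcases eq_or_ne a b with rfl | hab
  · simp [br]
  · exact cross hG hab (by simp) (by simp)

lemma brXpXp (a b : Fin N) : br (Xp a) (Xp b) = 0 := by
  rcases eq_or_ne a b with rfl | hab
  · simp [br]
  · exact cross hG hab (by simp) (by simp)

lemma brHXp (a b : Fin N) : br (H a) (Xp b) = if a = b then (2 : ℂ) • Xp b else 0 := by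
  rcases eq_or_ne a b with rfl | hab
  · simpa [br] using hG.1 a
  · simp [hab, cross hG hab (show H a ∈ _ by simp) (show Xp b ∈ _ by simp)]

lemma brXpH (a b : Fin N) : br (Xp a) (H b) = if a = b then (-2 : ℂ) • Xp a else 0 := by
  rw [br_skew, brHXp hG b a]
  rcases eq_or_ne a b with rfl | hab
  · simp
  · simp [hab, Ne.symm hab]

lemma brHXm (a b : Fin N) : br (H a) (Xm b) = if a = b then (-2 : ℂ) • Xm b else 0 := by
  rcases eq_or_ne a b with rfl | hab
  · simpa [br] using hG.2.2.1 a
  · simp [hab, cross hG hab (show H a ∈ _ by simp) (show Xm b ∈ _ by simp)]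

lemma brXpXm (a b : Fin N) : br (Xp a) (Xm b) = if a = b then H b else 0 := by
  rcases eq_or_ne a b with rfl | hab
  · simpa [br] using hG.2.1 a
  · simp [hab, cross hG hab (show Xp a ∈ _ by simp) (show Xm b ∈ _ by simp)]

lemma brXmH (a b : Fin N) : br (Xm a) (H b) = if a = b then (2 : ℂ) • Xm a else 0 := by
  rw [br_skew, brHXm hG b a]
  rcases eq_or_ne a b with rfl | hab
  · simp
  · simp [hab, Ne.symm hab]

lemma brXmXp (a b : Fin N) : br (Xm a) (Xp b) = if a = b then -H a else 0 := by
  rw [br_skew, brXpXm hG b a]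
  rcases eq_or_ne a b with rfl | hab
  · simp
  · simp [hab, Ne.symm hab]

end Sites

section Raw
variable {N : ℕ} {H Xp Xm : Fin N → A} (hG : GaudinSites H Xp Xm)
  (z : Fin N → ℂ) (ξ : ℂ) (l m : ℂ)
include hG

lemma br_h_h :
    br (hCur z ξ H Xp l) (hCur z ξ H Xp m) =
      ∑ a, (2 * ξ * z a * ((l - z a)⁻¹ - (m - z a)⁻¹)) • Xp a := by
  rw [hCur, hCur, br_sum_sum]
  refine Finset.sum_congr rfl fun a _ => ?_
  rw [Finset.sum_eq_single a ?h1 (by simp)]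
  · simp only [br_add_left, br_add_right, br_smul_left, br_smul_right,
      brHH hG, brHXp hG, brXpH hG, brXpXp hG, eq_self_iff_true, if_true, smul_zero, smul_smul]
    match_scalars <;> ring
  · intro b _ hba
    simp [br_add_left, br_add_right, br_smul_left, br_smul_right,
      brHH hG, brHXp hG, brXpH hG, brXpXp hG, Ne.symm hba]

lemma br_h_Xp :
    br (hCur z ξ H Xp l) (XpCur z Xp m) =
      ∑ a, (2 * (l - z a)⁻¹ * (m - z a)⁻¹) • Xp a := by
  rw [hCur, XpCur, br_sum_sum]
  refine Finset.sum_congr rfl fun a _ => ?_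
  rw [Finset.sum_eq_single a ?h1 (by simp)]
  · simp only [br_add_left, br_smul_left, br_smul_right,
      brHXp hG, brXpXp hG, eq_self_iff_true, if_true, smul_zero, smul_smul, add_zero]
    match_scalars <;> ring
  · intro b _ hba
    simp [br_add_left, br_smul_left, br_smul_right, brHXp hG, brXpXp hG, Ne.symm hba]

lemma br_h_Xm :
    br (hCur z ξ H Xp l) (XmCur z ξ H Xm m) =
      ∑ a, (((-2) * (l - z a)⁻¹ * (m - z a)⁻¹) • Xm a
        + (ξ * z a * (m - z a)⁻¹) • H a + (ξ ^ 2 * z a * m) • Xp a) := by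
  rw [hCur, XmCur, br_sum_sum]
  refine Finset.sum_congr rfl fun a _ => ?_
  rw [Finset.sum_eq_single a ?h1 (by simp)]
  · simp only [br_add_left, br_sub_right, br_smul_left, br_smul_right,
      brHH hG, brHXm hG, brXpXm hG, brXpH hG, eq_self_iff_true, if_true, smul_zero, smul_smul, sub_zero]
    match_scalars <;> ring
  · intro b _ hba
    simp [br_add_left, br_sub_right, br_smul_left, br_smul_right,
      brHH hG, brHXm hG, brXpXm hG, brXpH hG, Ne.symm hba]

lemma br_hd_h :
    br (hdCur z H l) (hCur z ξ H Xp m) =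
      ∑ a, ((-2) * ξ * z a * ((l - z a) ^ 2)⁻¹) • Xp a := by
  rw [hdCur, hCur, br_sum_sum]
  refine Finset.sum_congr rfl fun a _ => ?_
  rw [Finset.sum_eq_single a ?h1 (by simp)]
  · simp only [neg_smul, br_neg_left, br_add_right, br_smul_left, br_smul_right,
      brHH hG, brHXp hG, eq_self_iff_true, if_true, smul_zero, smul_smul, zero_add,
      neg_zero, smul_neg]
    match_scalars <;> ring
  · intro b _ hba
    simp [neg_smul, br_neg_left, br_add_right, br_smul_left, br_smul_right,
      brHH hG, brHXp hG, Ne.symm hba]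

end Raw

section Current
variable {N : ℕ} {H Xp Xm : Fin N → A} (hG : GaudinSites H Xp Xm)
  (z : Fin N → ℂ) (ξ : ℂ) (l m : ℂ)
include hG

lemma C1 (hl : ∀ a, l - z a ≠ 0) (hm : ∀ a, m - z a ≠ 0) :
    br (hCur z ξ H Xp l) (hCur z ξ H Xp m) =
      (2 * ξ * l) • XpCur z Xp l - (2 * ξ * m) • XpCur z Xp m := by
  rw [br_h_h hG]
  simp only [XpCur, Finset.smul_sum, ← Finset.sum_sub_distrib]
  refine Finset.sum_congr rfl fun a _ => ?_
  match_scalars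
  field_simp [hl a, hm a]
  ring

lemma C2 (hl : ∀ a, l - z a ≠ 0) (hm : ∀ a, m - z a ≠ 0) (hlm : l - m ≠ 0) :
    br (hCur z ξ H Xp l) (XpCur z Xp m) =
      (2 * (l - m)⁻¹) • XpCur z Xp m - (2 * (l - m)⁻¹) • XpCur z Xp l := by
  rw [br_h_Xp hG]
  simp only [XpCur, Finset.smul_sum, ← Finset.sum_sub_distrib]
  refine Finset.sum_congr rfl fun a _ => ?_
  match_scalars
  field_simp [hl a, hm a]
  ring

lemma C3 (hl : ∀ a, l - z a ≠ 0) (hm : ∀ a, m - z a ≠ 0) (hlm : l - m ≠ 0) :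
    br (hCur z ξ H Xp l) (XmCur z ξ H Xm m) =
      (2 * (l - m)⁻¹) • XmCur z ξ H Xm l - (2 * (l - m)⁻¹) • XmCur z ξ H Xm m
        + (ξ * m) • hCur z ξ H Xp m := by
  rw [br_h_Xm hG]
  simp only [XmCur, hCur, Finset.smul_sum, ← Finset.sum_sub_distrib, ← Finset.sum_add_distrib]
  refine Finset.sum_congr rfl fun a _ => ?_
  match_scalars <;> (field_simp [hl a, hm a] <;> ring)

lemma resid (hl : ∀ a, l - z a ≠ 0) :
    (2 : ℂ) • br (hdCur z H l) (hCur z ξ H Xp m)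
      + (2 * ξ * l) • br (hCur z ξ H Xp l) (XpCur z Xp l) =
      (4 * ξ) • XpCur z Xp l := by
  rw [br_hd_h hG, br_h_Xp hG]
  simp only [XpCur, Finset.smul_sum, ← Finset.sum_add_distrib]
  refine Finset.sum_congr rfl fun a _ => ?_
  match_scalars
  field_simp [hl a]
  ring

end Current

section Main
variable {N : ℕ}

lemma main (z : Fin N → ℂ) (ξ : ℂ) (H Xp Xm : Fin N → A) (hG : GaudinSites H Xp Xm)
    (l m : ℂ) (hl : ∀ a, l - z a ≠ 0) (hm : ∀ a, m - z a ≠ 0) (hlm : l ≠ m) :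
    tCur z ξ H Xp Xm l * hCur z ξ H Xp m - hCur z ξ H Xp m * tCur z ξ H Xp Xm l =
      (8 * (l - m)⁻¹) • (XmCur z ξ H Xm m * XpCur z Xp l - XmCur z ξ H Xm l * XpCur z Xp m) -
        (4 * ξ) • (((1 : A) + m • hCur z ξ H Xp l) * XpCur z Xp m) := by
  have hlm' : l - m ≠ 0 := sub_ne_zero.mpr hlm
  have hml' : m - l ≠ 0 := sub_ne_zero.mpr hlm.symm
  have e1 := C1 hG z ξ l m hl hm
  have e2lm := C2 hG z ξ l m hl hm hlm'
  have er' : (2 : ℂ) • br (hdCur z H l) (hCur z ξ H Xp m) =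
      (4 * ξ) • XpCur z Xp l
        - (2 * ξ * l) • br (hCur z ξ H Xp l) (XpCur z Xp l) := by
    rw [← resid hG z ξ l m hl]; abel
  have f2 : br (XpCur z Xp l) (hCur z ξ H Xp m) =
      (2 * (m - l)⁻¹) • XpCur z Xp m - (2 * (m - l)⁻¹) • XpCur z Xp l := by
    rw [br_skew, C2 hG z ξ m l hm hl hml']; module
  have f3 : br (XmCur z ξ H Xm l) (hCur z ξ H Xp m) =
      (2 * (m - l)⁻¹) • XmCur z ξ H Xm l - (2 * (m - l)⁻¹) • XmCur z ξ H Xm m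
        - (ξ * l) • hCur z ξ H Xp l := by
    rw [br_skew, C3 hG z ξ m l hm hl hml']; module
  have s1 : XpCur z Xp l * hCur z ξ H Xp l =
      hCur z ξ H Xp l * XpCur z Xp l - br (hCur z ξ H Xp l) (XpCur z Xp l) := by
    rw [br]; abel
  have s2 : XpCur z Xp m * hCur z ξ H Xp l =
      hCur z ξ H Xp l * XpCur z Xp m - br (hCur z ξ H Xp l) (XpCur z Xp m) := by
    rw [br]; abel
  show br (tCur z ξ H Xp Xm l) (hCur z ξ H Xp m) = _
  rw [tCur]
  simp only [br_add_left, br_sub_left, br_mul_left, br_smul_left, br_one_left,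
    smul_zero, add_zero]
  rw [e1, er', f2, f3]
  simp only [smul_zero, add_zero, smul_add, smul_sub, smul_smul, smul_mul_assoc,
    mul_smul_comm, add_mul, sub_mul, mul_add, mul_sub, one_mul]
  rw [s1, s2, e2lm]
  simp only [smul_add, smul_sub, smul_smul, mul_smul_comm, smul_mul_assoc, one_mul, add_mul]
  match_scalars <;> (field_simp; try ring)

end Main
end GaudinAux

/-- `[t(λ), h(μ)] = 8(X⁻(μ)X⁺(λ) - X⁻(λ)X⁺(μ))/(λ-μ) - 4ξ(1 + μh(λ))X⁺(μ)`. -/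
theorem tCur_hCur_comm {A : Type*} [Ring A] [Algebra ℂ A] {N : ℕ} (z : Fin N → ℂ) (ξ : ℂ)
    (H Xp Xm : Fin N → A) (hz : Function.Injective z) (hG : GaudinSites H Xp Xm)
    (l m : ℂ) (hl : l ∉ Set.range z) (hm : m ∉ Set.range z) (hlm : l ≠ m) :
    tCur z ξ H Xp Xm l * hCur z ξ H Xp m - hCur z ξ H Xp m * tCur z ξ H Xp Xm l =
      (8 * (l - m)⁻¹) • (XmCur z ξ H Xm m * XpCur z Xp l - XmCur z ξ H Xm l * XpCur z Xp m) -
        (4 * ξ) • (((1 : A) + m • hCur z ξ H Xp l) * XpCur z Xp m) := by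
  have hl' : ∀ a, l - z a ≠ 0 := fun a h => hl ⟨a, (sub_eq_zero.mp h).symm⟩
  have hm' : ∀ a, m - z a ≠ 0 := fun a h => hm ⟨a, (sub_eq_zero.mp h).symm⟩
  exact GaudinAux.main z ξ H Xp Xm hG l m hl' hm' hlm

end
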